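/- arXiv:2208.10788 — 3 statements merged into one kernel-verified Lean document; each statement's English description precedes it below -/
import Mathlib

section
/- Let d1, d2 be positive natural numbers, let δt > 0, ε > 0, B ≥ 0 be real numbers, and let Λ be the (d1+d2)×(d1+d2) block-diagonal matrix with blocks I_{d1} and (1/ε)·I_{d2}. For i ∈ {1,2}, let z_i = (θ̄_i, η̄_i) ∈ ℝ^{d1} × ℝ^{d2} and let C_i = δt·Λ². If ‖η̄_1 − η̄_2‖ ≤ B, then | d(z_1, z_2) − (1/δt)·‖θ̄_1 − θ̄_2‖² | ≤ ε²·B²/δt. In particular, for bounded noise baselines the modified Mahalanobis distance equals (1/δt)[‖θ̄_1 − θ̄_2‖² + O(ε²)]. -/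
/-!
Since `Λ` is diagonal, `C⁻¹ = δt⁻¹ Λ⁻²` is diagonal with entries `1/δt` on the `θ`-block and
`ε²/δt` on the `η`-block, so the distance is exactly `(‖θ₁ - θ₂‖² + ε²‖η₁ - η₂‖²)/δt`. The error
is therefore `ε²‖η₁ - η₂‖²/δt ≤ ε²B²/δt`.
-/

open Matrix

section DiagonalMatrix

variable {n K : Type*} [Fintype n] [DecidableEq n] [Field K]

theorem inv_diagonal_of_ne_zero {c : n → K} (hc : ∀ i, c i ≠ 0) :
    (diagonal c)⁻¹ = diagonal c⁻¹ := by
  refine inv_eq_left_inv ?_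
  rw [diagonal_mul_diagonal, ← diagonal_one]
  congr 1
  funext i
  exact inv_mul_cancel₀ (hc i)

theorem dotProduct_diagonal_mulVec (c w : n → K) :
    w ⬝ᵥ (diagonal c *ᵥ w) = ∑ i, c i * w i ^ 2 := by
  simp only [dotProduct, mulVec_diagonal]
  exact Finset.sum_congr rfl fun i _ => by ring

noncomputable def modMahalanobis (C₁ C₂ : Matrix n n ℝ) (z₁ z₂ : n → ℝ) : ℝ :=
  (1 / 2) * ((z₁ - z₂) ⬝ᵥ ((C₁⁻¹ + C₂⁻¹) *ᵥ (z₁ - z₂)))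

theorem modMahalanobis_diagonal_self {c : n → ℝ} (hc : ∀ i, c i ≠ 0) (z₁ z₂ : n → ℝ) :
    modMahalanobis (diagonal c) (diagonal c) z₁ z₂ = ∑ i, (z₁ i - z₂ i) ^ 2 / c i := by
  rw [modMahalanobis, ← two_smul ℝ, smul_mulVec, dotProduct_smul, inv_diagonal_of_ne_zero hc,
    dotProduct_diagonal_mulVec, smul_eq_mul, ← mul_assoc, one_div_mul_cancel two_ne_zero,
    one_mul]
  exact Finset.sum_congr rfl fun i _ => by simp only [Pi.inv_apply, Pi.sub_apply]; ring

end DiagonalMatrix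

theorem smul_fromBlocks_one_smul_one_mul_self {l m K : Type*} [Fintype l] [Fintype m]
    [DecidableEq l] [DecidableEq m] [Field K] (a ε : K) :
    a • ((fromBlocks 1 0 0 ((1 / ε) • 1) : Matrix (l ⊕ m) (l ⊕ m) K) *
      fromBlocks 1 0 0 ((1 / ε) • 1)) = diagonal (Sum.elim (fun _ => a) (fun _ => a / ε ^ 2)) := by
  simp only [← diagonal_one, fromBlocks_diagonal, diagonal_mul_diagonal, ← diagonal_smul]
  congr 1
  funext i
  rcases i with i | i <;> simp [div_eq_mul_inv, sq]

theorem stmt_1_general (d1 d2 : ℕ)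
    (δt ε B : ℝ) (hδt : 0 < δt) (hε : 0 < ε)
    (θ₁ θ₂ : EuclideanSpace ℝ (Fin d1)) (η₁ η₂ : EuclideanSpace ℝ (Fin d2))
    (hη : ‖η₁ - η₂‖ ≤ B) :
    let Λ : Matrix (Fin d1 ⊕ Fin d2) (Fin d1 ⊕ Fin d2) ℝ :=
      Matrix.fromBlocks 1 0 0 ((1 / ε) • 1)
    let C₁ : Matrix (Fin d1 ⊕ Fin d2) (Fin d1 ⊕ Fin d2) ℝ := δt • (Λ * Λ)
    let C₂ : Matrix (Fin d1 ⊕ Fin d2) (Fin d1 ⊕ Fin d2) ℝ := δt • (Λ * Λ)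
    let z₁ : Fin d1 ⊕ Fin d2 → ℝ := Sum.elim (fun k => θ₁ k) (fun k => η₁ k)
    let z₂ : Fin d1 ⊕ Fin d2 → ℝ := Sum.elim (fun k => θ₂ k) (fun k => η₂ k)
    |(1 / 2) * ((z₁ - z₂) ⬝ᵥ ((C₁⁻¹ + C₂⁻¹) *ᵥ (z₁ - z₂))) -
        (1 / δt) * ‖θ₁ - θ₂‖ ^ 2| ≤ ε ^ 2 * B ^ 2 / δt := by
  intro Λ C₁ C₂ z₁ z₂
  change |modMahalanobis C₁ C₂ z₁ z₂ - _| ≤ _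
  set c : Fin d1 ⊕ Fin d2 → ℝ := Sum.elim (fun _ => δt) (fun _ => δt / ε ^ 2)
  have hC : C₁ = diagonal c := smul_fromBlocks_one_smul_one_mul_self δt ε
  have hc : ∀ i, c i ≠ 0 := by
    rintro (i | i) <;> simp only [c, Sum.elim_inl, Sum.elim_inr] <;> positivity
  have hdist : modMahalanobis C₁ C₂ z₁ z₂ = (‖θ₁ - θ₂‖ ^ 2 + ε ^ 2 * ‖η₁ - η₂‖ ^ 2) / δt := by
    rw [show C₂ = C₁ from rfl, hC, modMahalanobis_diagonal_self hc, Fintype.sum_sum_type,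
      EuclideanSpace.real_norm_sq_eq, EuclideanSpace.real_norm_sq_eq, Finset.mul_sum,
      add_div, Finset.sum_div, Finset.sum_div]
    congr 1
    exact Finset.sum_congr rfl fun k _ => by simp [z₁, z₂, c]; field_simp
  rw [hdist, show (‖θ₁ - θ₂‖ ^ 2 + ε ^ 2 * ‖η₁ - η₂‖ ^ 2) / δt - 1 / δt * ‖θ₁ - θ₂‖ ^ 2
      = ε ^ 2 * ‖η₁ - η₂‖ ^ 2 / δt by ring, abs_of_nonneg (by positivity)]
  gcongr

/-- Proposition 1 (quantitative form): for bounded noise baselines, the modified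
Mahalanobis distance between the features `zᵢ = (θᵢ, ηᵢ)` with covariances
`Cᵢ = δt·Λ²` equals `(1/δt)‖θ₁ − θ₂‖²` up to an error of at most `ε²B²/δt`. -/
theorem stmt_1 (d1 d2 : ℕ) (hd1 : 0 < d1) (hd2 : 0 < d2)
    (δt ε B : ℝ) (hδt : 0 < δt) (hε : 0 < ε) (hB : 0 ≤ B)
    (θ₁ θ₂ : EuclideanSpace ℝ (Fin d1)) (η₁ η₂ : EuclideanSpace ℝ (Fin d2))
    (hη : ‖η₁ - η₂‖ ≤ B) :
    let Λ : Matrix (Fin d1 ⊕ Fin d2) (Fin d1 ⊕ Fin d2) ℝ :=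
      Matrix.fromBlocks 1 0 0 ((1 / ε) • 1)
    let C₁ : Matrix (Fin d1 ⊕ Fin d2) (Fin d1 ⊕ Fin d2) ℝ := δt • (Λ * Λ)
    let C₂ : Matrix (Fin d1 ⊕ Fin d2) (Fin d1 ⊕ Fin d2) ℝ := δt • (Λ * Λ)
    let z₁ : Fin d1 ⊕ Fin d2 → ℝ := Sum.elim (fun k => θ₁ k) (fun k => η₁ k)
    let z₂ : Fin d1 ⊕ Fin d2 → ℝ := Sum.elim (fun k => θ₂ k) (fun k => η₂ k)
    |(1 / 2) * ((z₁ - z₂) ⬝ᵥ ((C₁⁻¹ + C₂⁻¹) *ᵥ (z₁ - z₂))) -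
        (1 / δt) * ‖θ₁ - θ₂‖ ^ 2| ≤ ε ^ 2 * B ^ 2 / δt :=
  stmt_1_general d1 d2 δt ε B hδt hε θ₁ θ₂ η₁ η₂ hη
end

section
/- Let d ≤ s be positive natural numbers, let U be an s×d real matrix with orthonormal columns (UᵀU = I_d), Σ an invertible d×d diagonal matrix, V a d×d orthogonal matrix (VᵀV = I_d), and Λ an invertible symmetric d×d matrix. Set A = UΣVᵀ and M = UΣ⁻¹VᵀΛ⁻¹VΣ⁻¹Uᵀ. Then for all x̄_i, x̄_l ∈ ℝ^d, with z_i = A·x̄_i and z_l = A·x̄_l, (1/2)·(z_i − z_l)ᵀ·(M + M)·(z_i − z_l) = (x̄_i − x̄_l)ᵀ·Λ⁻¹·(x̄_i − x̄_l). -/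
open Matrix

/-- Appendix C, distance identity: for linear measurements `zᵢ = A·x̄ᵢ` with
`A = UΣVᵀ` and `M = UΣ⁻¹VᵀΛ⁻¹VΣ⁻¹Uᵀ` the pseudo-inverse of `C = AΛAᵀ`, the
modified Mahalanobis distance `(1/2)(zᵢ−zₗ)ᵀ(M+M)(zᵢ−zₗ)` equals
`(x̄ᵢ−x̄ₗ)ᵀΛ⁻¹(x̄ᵢ−x̄ₗ)`. -/
theorem stmt_10 (d s : ℕ) (hd : 0 < d) (hs : 0 < s) (hds : d ≤ s)
    (U : Matrix (Fin s) (Fin d) ℝ) (hU : Uᵀ * U = 1)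
    (Sig : Matrix (Fin d) (Fin d) ℝ) (hSigDiag : Sig.IsDiag) (hSig : IsUnit Sig.det)
    (V : Matrix (Fin d) (Fin d) ℝ) (hV : Vᵀ * V = 1)
    (Λ : Matrix (Fin d) (Fin d) ℝ) (hΛsymm : Λᵀ = Λ) (hΛ : IsUnit Λ.det) :
    let A := U * Sig * Vᵀ
    let M := U * Sig⁻¹ * Vᵀ * Λ⁻¹ * V * Sig⁻¹ * Uᵀ
    ∀ xi xl : Fin d → ℝ,
      (1 / 2) * ((A *ᵥ xi - A *ᵥ xl) ⬝ᵥ ((M + M) *ᵥ (A *ᵥ xi - A *ᵥ xl))) =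
        (xi - xl) ⬝ᵥ (Λ⁻¹ *ᵥ (xi - xl)) := by
  intro A M xi xl
  have hVV : V * Vᵀ = 1 := mul_eq_one_comm.mp hV
  have hS1 : Sig * Sig⁻¹ = 1 := Matrix.mul_nonsing_inv _ hSig
  have hS2 : Sig⁻¹ * Sig = 1 := Matrix.nonsing_inv_mul _ hSig
  have hSt : Sigᵀ = Sig := by
    ext i j
    by_cases h : i = j
    · simp [h]
    · simp [Matrix.transpose_apply, hSigDiag h, hSigDiag (Ne.symm h)]
  have c1 : ∀ X : Matrix (Fin d) (Fin d) ℝ, Uᵀ * (U * X) = X := fun X => by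
    rw [← Matrix.mul_assoc, hU, Matrix.one_mul]
  have c2 : ∀ X : Matrix (Fin d) (Fin d) ℝ, Sig⁻¹ * (Sig * X) = X := fun X => by
    rw [← Matrix.mul_assoc, hS2, Matrix.one_mul]
  have c3 : ∀ X : Matrix (Fin d) (Fin d) ℝ, V * (Vᵀ * X) = X := fun X => by
    rw [← Matrix.mul_assoc, hVV, Matrix.one_mul]
  have c4 : ∀ X : Matrix (Fin d) (Fin d) ℝ, Sig * (Sig⁻¹ * X) = X := fun X => by
    rw [← Matrix.mul_assoc, hS1, Matrix.one_mul]
  have key : Aᵀ * (M * A) = Λ⁻¹ := by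
    show (U * Sig * Vᵀ)ᵀ * ((U * Sig⁻¹ * Vᵀ * Λ⁻¹ * V * Sig⁻¹ * Uᵀ) * (U * Sig * Vᵀ)) = Λ⁻¹
    simp only [Matrix.transpose_mul, Matrix.transpose_transpose, hSt, Matrix.mul_assoc,
      c1, c2, c3, c4, hVV, Matrix.mul_one]
  have hw : A *ᵥ xi - A *ᵥ xl = A *ᵥ (xi - xl) := (Matrix.mulVec_sub A xi xl).symm
  set w := xi - xl with hwdef
  rw [hw]
  have hdot : (A *ᵥ w) ⬝ᵥ (M *ᵥ (A *ᵥ w)) = w ⬝ᵥ (Λ⁻¹ *ᵥ w) := by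
    rw [Matrix.mulVec_mulVec, Matrix.dotProduct_mulVec, ← Matrix.vecMul_transpose,
      Matrix.vecMul_vecMul, ← Matrix.mul_assoc, Matrix.mul_assoc, key,
      ← Matrix.dotProduct_mulVec]
  rw [Matrix.add_mulVec, dotProduct_add, hdot]
  ring
end

section
/- Let d1, d2 be positive natural numbers with d = d1 + d2, let s ≥ d, let δt > 0 and ε > 0 be real numbers, and let Λ be the d×d block-diagonal matrix δt·diag(I_{d1}, (1/ε²)·I_{d2}). Let U be an s×d real matrix with orthonormal columns (UᵀU = I_d), Σ an invertible d×d diagonal matrix, V a d×d orthogonal matrix (VᵀV = I_d), and set A = UΣVᵀ and M = UΣ⁻¹VᵀΛ⁻¹VΣ⁻¹Uᵀ. Then for all θ̄_1, θ̄_2 ∈ ℝ^{d1} and η̄_1, η̄_2 ∈ ℝ^{d2}, with x̄_i = (θ̄_i, η̄_i) and z_i = A·x̄_i, (1/2)·(z_1 − z_2)ᵀ·(M + M)·(z_1 − z_2) = (1/δt)·( ‖θ̄_1 − θ̄_2‖² + ε²·‖η̄_1 − η̄_2‖² ). -/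
/-!
Writing the difference of the hidden states as `x = (θ₁ - θ₂, η₁ - η₂)`, the quantity is the
quadratic form of `Aᵀ M A` at `x`. Because `U` has orthonormal columns, `V` is orthogonal and `Σ`
is symmetric, the singular value factors cancel in `Aᵀ M A = VΣUᵀ · UΣ⁻¹VᵀΛ⁻¹VΣ⁻¹Uᵀ · UΣVᵀ`,
leaving `Λ⁻¹ = δt⁻¹ · diag(I, ε² I)`, whose quadratic form at `x` is the right-hand side.
-/

open Matrix

namespace Matrix

section SingularValueDecomposition

variable {m n R : Type*} [Fintype m] [Fintype n] [DecidableEq n] [CommRing R]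

theorem transpose_mul_mul_eq_of_orthonormal {U : Matrix m n R} (hU : Uᵀ * U = 1)
    {S : Matrix n n R} (hS : S.IsSymm) (hSdet : IsUnit S.det)
    {V : Matrix n n R} (hV : Vᵀ * V = 1) (P : Matrix n n R) :
    (U * S * Vᵀ)ᵀ * (U * S⁻¹ * Vᵀ * P * V * S⁻¹ * Uᵀ) * (U * S * Vᵀ) = P := by
  have hVV : V * Vᵀ = 1 := mul_eq_one_comm.mp hV
  simp only [transpose_mul, transpose_transpose, hS.eq, ← Matrix.mul_assoc]
  rw [Matrix.mul_assoc (V * S) Uᵀ U, hU, Matrix.mul_one,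
    Matrix.mul_assoc V S S⁻¹, mul_nonsing_inv _ hSdet, Matrix.mul_one, hVV, Matrix.one_mul,
    Matrix.mul_assoc (P * V * S⁻¹) Uᵀ U, hU, Matrix.mul_one,
    Matrix.mul_assoc (P * V) S⁻¹ S, nonsing_inv_mul _ hSdet, Matrix.mul_one,
    Matrix.mul_assoc P V Vᵀ, hVV, Matrix.mul_one]

end SingularValueDecomposition

theorem mulVec_dotProduct_mulVec_mulVec {m n R : Type*} [Fintype m] [Fintype n]
    [CommSemiring R] (A : Matrix m n R) (M : Matrix m m R) (x : n → R) :
    A *ᵥ x ⬝ᵥ M *ᵥ (A *ᵥ x) = x ⬝ᵥ (Aᵀ * M * A) *ᵥ x := by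
  rw [mulVec_mulVec, dotProduct_comm, dotProduct_mulVec, ← mulVec_transpose, mulVec_mulVec,
    ← Matrix.mul_assoc, dotProduct_comm]

section Blocks

variable {l m : Type*} [Fintype l] [Fintype m] [DecidableEq l] [DecidableEq m]

theorem inv_smul_fromBlocks_one_smul_one {K : Type*} [Field K] {a b : K}
    (ha : a ≠ 0) (hb : b ≠ 0) :
    (a • fromBlocks (1 : Matrix l l K) 0 0 (b • (1 : Matrix m m K)))⁻¹ =
      a⁻¹ • fromBlocks 1 0 0 (b⁻¹ • 1) := by
  refine inv_eq_right_inv ?_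
  rw [Matrix.smul_mul, Matrix.mul_smul, smul_smul, mul_inv_cancel₀ ha, one_smul,
    fromBlocks_multiply]
  simp [smul_smul, inv_mul_cancel₀ hb]

theorem sumElim_dotProduct_fromBlocks_one_smul_one_mulVec {R : Type*} [CommRing R] (c : R)
    (u : l → R) (v : m → R) :
    (u ⊕ᵥ v) ⬝ᵥ fromBlocks 1 0 0 (c • 1) *ᵥ (u ⊕ᵥ v) = u ⬝ᵥ u + c * (v ⬝ᵥ v) := by
  simp [fromBlocks_mulVec, smul_mulVec, sumElim_dotProduct_sumElim]

end Blocks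

end Matrix

theorem EuclideanSpace.real_norm_sq_eq_dotProduct {ι : Type*} [Fintype ι]
    (x : EuclideanSpace ℝ ι) : ‖x‖ ^ 2 = x.ofLp ⬝ᵥ x.ofLp := by
  rw [← real_inner_self_eq_norm_sq, EuclideanSpace.inner_eq_star_dotProduct, star_trivial]

theorem stmt_11_general (d1 d2 s : ℕ)
    (δt ε : ℝ) (hδt : 0 < δt) (hε : 0 < ε)
    (U : Matrix (Fin s) (Fin d1 ⊕ Fin d2) ℝ) (hU : Uᵀ * U = 1)
    (Sig : Matrix (Fin d1 ⊕ Fin d2) (Fin d1 ⊕ Fin d2) ℝ)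
    (hSigDiag : Sig.IsDiag) (hSig : IsUnit Sig.det)
    (V : Matrix (Fin d1 ⊕ Fin d2) (Fin d1 ⊕ Fin d2) ℝ) (hV : Vᵀ * V = 1) :
    let Λ : Matrix (Fin d1 ⊕ Fin d2) (Fin d1 ⊕ Fin d2) ℝ :=
      δt • Matrix.fromBlocks 1 0 0 ((1 / ε ^ 2) • 1)
    let A := U * Sig * Vᵀ
    let M := U * Sig⁻¹ * Vᵀ * Λ⁻¹ * V * Sig⁻¹ * Uᵀ
    ∀ (θ₁ θ₂ : EuclideanSpace ℝ (Fin d1)) (η₁ η₂ : EuclideanSpace ℝ (Fin d2)),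
      (1 / 2) *
          ((A *ᵥ Sum.elim (fun k => θ₁ k) (fun k => η₁ k)
              - A *ᵥ Sum.elim (fun k => θ₂ k) (fun k => η₂ k)) ⬝ᵥ
            ((M + M) *ᵥ
              (A *ᵥ Sum.elim (fun k => θ₁ k) (fun k => η₁ k)
                - A *ᵥ Sum.elim (fun k => θ₂ k) (fun k => η₂ k)))) =
        (1 / δt) * (‖θ₁ - θ₂‖ ^ 2 + ε ^ 2 * ‖η₁ - η₂‖ ^ 2) := by
  intro Λ A M θ₁ θ₂ η₁ η₂
  have hΛinv : Λ⁻¹ = δt⁻¹ • fromBlocks (1 : Matrix (Fin d1) (Fin d1) ℝ) 0 0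
      (ε ^ 2 • (1 : Matrix (Fin d2) (Fin d2) ℝ)) := by
    simpa only [Λ, one_div, inv_inv] using inv_smul_fromBlocks_one_smul_one (l := Fin d1)
      (m := Fin d2) hδt.ne' (inv_ne_zero (pow_ne_zero 2 hε.ne'))
  have hAMA : Aᵀ * M * A = Λ⁻¹ :=
    transpose_mul_mul_eq_of_orthonormal hU hSigDiag.isSymm hSig hV _
  rw [← mulVec_sub, ← Sum.elim_sub_sub, add_mulVec, dotProduct_add,
    mulVec_dotProduct_mulVec_mulVec, hAMA, hΛinv, smul_mulVec, dotProduct_smul,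
    sumElim_dotProduct_fromBlocks_one_smul_one_mulVec,
    EuclideanSpace.real_norm_sq_eq_dotProduct, EuclideanSpace.real_norm_sq_eq_dotProduct]
  simp only [smul_eq_mul, one_div, WithLp.ofLp_sub]
  ring

/-- Appendix C combined with Proposition 1: for linear measurements `zᵢ = A·x̄ᵢ`
of hidden variables `x̄ᵢ = (θᵢ, ηᵢ)` with increment covariance
`Λ = δt·diag(I, (1/ε²)I)`, the modified Mahalanobis distance computed with the
pseudo-inverse `M = UΣ⁻¹VᵀΛ⁻¹VΣ⁻¹Uᵀ` equals
`(1/δt)(‖θ₁−θ₂‖² + ε²‖η₁−η₂‖²)`. -/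
theorem stmt_11 (d1 d2 s : ℕ) (hd1 : 0 < d1) (hd2 : 0 < d2) (hds : d1 + d2 ≤ s)
    (δt ε : ℝ) (hδt : 0 < δt) (hε : 0 < ε)
    (U : Matrix (Fin s) (Fin d1 ⊕ Fin d2) ℝ) (hU : Uᵀ * U = 1)
    (Sig : Matrix (Fin d1 ⊕ Fin d2) (Fin d1 ⊕ Fin d2) ℝ)
    (hSigDiag : Sig.IsDiag) (hSig : IsUnit Sig.det)
    (V : Matrix (Fin d1 ⊕ Fin d2) (Fin d1 ⊕ Fin d2) ℝ) (hV : Vᵀ * V = 1) :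
    let Λ : Matrix (Fin d1 ⊕ Fin d2) (Fin d1 ⊕ Fin d2) ℝ :=
      δt • Matrix.fromBlocks 1 0 0 ((1 / ε ^ 2) • 1)
    let A := U * Sig * Vᵀ
    let M := U * Sig⁻¹ * Vᵀ * Λ⁻¹ * V * Sig⁻¹ * Uᵀ
    ∀ (θ₁ θ₂ : EuclideanSpace ℝ (Fin d1)) (η₁ η₂ : EuclideanSpace ℝ (Fin d2)),
      (1 / 2) *
          ((A *ᵥ Sum.elim (fun k => θ₁ k) (fun k => η₁ k)
              - A *ᵥ Sum.elim (fun k => θ₂ k) (fun k => η₂ k)) ⬝ᵥ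
            ((M + M) *ᵥ
              (A *ᵥ Sum.elim (fun k => θ₁ k) (fun k => η₁ k)
                - A *ᵥ Sum.elim (fun k => θ₂ k) (fun k => η₂ k)))) =
        (1 / δt) * (‖θ₁ - θ₂‖ ^ 2 + ε ^ 2 * ‖η₁ - η₂‖ ^ 2) :=
  stmt_11_general d1 d2 s δt ε hδt hε U hU Sig hSigDiag hSig V hV
end
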